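/- There is a single-commodity fixed-departure-time instance admitting a continuum of user equilibria f^λ, λ ∈ [0,1], whose social costs π(f^λ) = τ_{p1} + λτ_{p3} + (1−λ)τ_{p4} are pairwise distinct; in particular, the social cost of a user equilibrium is not unique. -/

import Mathlib

open scoped BigOperators
open Filter

/-- A multi-commodity path flow. -/
abbrev PFlow (I : Type) (P : I → Type) := (i : I) → P i → ℝ

variable {V E : Type} [Fintype V] [DecidableEq V] [Fintype E] [DecidableEq E]
  {I : Type} [Fintype I] [DecidableEq I]
  {P : I → Type} [∀ i, Fintype (P i)] [∀ i, DecidableEq (P i)]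

/-- The ε-deviation `f_{i,p→q}(ε) = f + ε (1_{i,q} - 1_{i,p})`. -/
def deviate (f : PFlow I P) (i : I) (p q : P i) (ε : ℝ) : PFlow I P :=
  Function.update f i (fun r => f i r + ε * ((if r = q then 1 else 0) - (if r = p then 1 else 0)))

/-- A schedule-based time-expanded transit network: nodes `V` with times, edges `E` with
distinguished boarding and driving edges, `succ` mapping each boarding edge to its
succeeding driving edge, `prev`/`first` describing the chain of driving edges of each
vehicle, capacities `ν`, and for each commodity `i` a demand, a set of allowed departure
nodes `src i`, destination nodes `dst i`, a designated outside option `out i`, the routes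
(edge lists) of all strategies, an outside-option cost and a cost function of the
departure and arrival times. -/
structure TEN (V E I : Type) (P : I → Type) where
  tail : E → V
  head : E → V
  time : V → ℝ
  boarding : Finset E
  driving : Finset E
  succ : E → E
  prev : E → E
  first : Finset E
  ν : E → ℝ
  Q : I → ℝ
  src : I → Finset V
  dst : I → Finset V
  out : (i : I) → P i
  route : (i : I) → P i → List E
  πout : I → ℝ
  cost : I → ℝ → ℝ → ℝ

namespace TEN

variable (N : TEN V E I P)

/-- Structural validity of the time-expanded transit network. -/
def Valid : Prop :=
  (∀ i, N.route i (N.out i) = []) ∧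
  (∀ i (p : P i), p ≠ N.out i →
    N.route i p ≠ [] ∧
    (N.route i p).Chain' (fun e e' => N.head e = N.tail e') ∧
    (∀ e, (N.route i p).head? = some e → N.tail e ∈ N.src i) ∧
    (∀ e, (N.route i p).getLast? = some e → N.head e ∈ N.dst i)) ∧
  (∀ e ∈ N.boarding, N.succ e ∈ N.driving ∧ N.tail (N.succ e) = N.head e) ∧
  (∀ i (p : P i), ∀ (k : ℕ) (e : E), (N.route i p)[k]? = some e → e ∈ N.boarding →
      (N.route i p)[k + 1]? = some (N.succ e)) ∧
  (∀ e ∈ N.driving, e ∉ N.first → N.prev e ∈ N.driving ∧ N.ν (N.prev e) = N.ν e) ∧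
  (∀ i (p : P i), ∀ e ∈ N.driving, e ∈ N.route i p → e ∉ N.first →
      ((∃ b ∈ N.boarding, N.succ b = e ∧ b ∈ N.route i p) ∨ N.prev e ∈ N.route i p)) ∧
  (∀ i (p : P i), ∀ e ∈ N.driving, e ∈ N.route i p → e ∈ N.first →
      ∃ b ∈ N.boarding, N.succ b = e ∧ b ∈ N.route i p) ∧
  (∀ e : E, N.time (N.tail e) ≤ N.time (N.head e))

/-- Departure time of a strategy (time of the tail of its first edge). -/
def depTime (i : I) (p : P i) : ℝ :=
  ((N.route i p).head?.map fun e => N.time (N.tail e)).getD 0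

/-- Arrival time of a strategy (time of the head of its last edge). -/
def arrTime (i : I) (p : P i) : ℝ :=
  ((N.route i p).getLast?.map fun e => N.time (N.head e)).getD 0

/-- The cost of a strategy: the outside-option cost, or the cost determined by the
departure and arrival times. -/
def π (i : I) (p : P i) : ℝ :=
  if p = N.out i then N.πout i else N.cost i (N.depTime i p) (N.arrTime i p)

/-- The edge set of a strategy. -/
def edges (i : I) (p : P i) : Finset E := (N.route i p).toFinset

/-- Total flow on an edge. -/
def edgeFlow (f : PFlow I P) (e : E) : ℝ :=
  ∑ i, ∑ p ∈ Finset.univ.filter (fun p : P i => e ∈ N.edges i p), f i p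

def DemandFeasible (f : PFlow I P) : Prop :=
  (∀ i (p : P i), 0 ≤ f i p) ∧ ∀ i, ∑ p, f i p = N.Q i

def CapacityFeasible (f : PFlow I P) : Prop :=
  ∀ e ∈ N.driving, N.edgeFlow f e ≤ N.ν e

def Feasible (f : PFlow I P) : Prop := N.DemandFeasible f ∧ N.CapacityFeasible f

/-- `f_{i,p→q}(ε)` is an admissible ε-deviation. -/
def Admissible (f : PFlow I P) (i : I) (p q : P i) (ε : ℝ) : Prop :=
  0 < ε ∧ ε ≤ f i p ∧
    ∀ e ∈ N.boarding, e ∈ N.edges i q →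
      N.edgeFlow (deviate f i p q ε) (N.succ e) ≤ N.ν (N.succ e)

/-- `q` is an available alternative to `p` for commodity `i` given `f`. -/
def Available (f : PFlow I P) (i : I) (p q : P i) : Prop :=
  ∃ ε, N.Admissible f i p q ε

/-- Side-constrained user equilibrium. -/
def IsUE (f : PFlow I P) : Prop :=
  N.Feasible f ∧
    ∀ i (p : P i), 0 < f i p → ∀ q : P i, N.Available f i p q → N.π i p ≤ N.π i q

/-- Fixed departure times: each commodity has (at most) one allowed departure node and its
cost depends only on the arrival time. -/
def FDT : Prop :=
  ∀ i, (N.src i).card ≤ 1 ∧ ∀ t t' a : ℝ, N.cost i t a = N.cost i t' a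

/-- The social cost of a flow. -/
def socialCost (f : PFlow I P) : ℝ := ∑ i, ∑ p, f i p * N.π i p

end TEN

/-! ### Auxiliary construction for Statement 10 (Example 3.14) -/

/-- Edges: 0 = board green (at s), 1 = green drive s→t, 2 = board blue (at s),
3 = blue drive s→v, 4 = board blue (at v), 5 = blue drive v→s, 6 = board red (at v),
7 = red drive v→t'.  Nodes: 0 = s, 1 = v, 2 = t (time 0), 3 = t' (time 1).
Strategies: 0 = green path, 1 = blue-blue-green, 2 = blue-red, 3 = outside option. -/
def exNet : TEN (Fin 4) (Fin 8) Unit (fun _ => Fin 4) where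
  tail := ![0, 0, 0, 0, 1, 1, 1, 1]
  head := ![0, 2, 0, 1, 1, 0, 1, 3]
  time := ![0, 0, 0, 1]
  boarding := {0, 2, 4, 6}
  driving := {1, 3, 5, 7}
  succ := fun e => e + 1
  prev := fun _ => 3
  first := {1, 3, 7}
  ν := fun _ => 1
  Q := fun _ => 2
  src := fun _ => {0}
  dst := fun _ => {2, 3}
  out := fun _ => 3
  route := fun _ => ![[0, 1], [2, 3, 4, 5, 0, 1], [2, 3, 6, 7], []]
  πout := fun _ => 2
  cost := fun _ _ a => a

def exF (lam : ℝ) : PFlow Unit (fun _ => Fin 4) := fun _ p =>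
  if p = 0 then lam else if p = 1 then 1 - lam else if p = 2 then lam else 1 - lam

lemma ex_pi (p : Fin 4) : exNet.π () p = ![(0 : ℝ), 0, 1, 2] p := by
  fin_cases p <;>
    simp [TEN.π, exNet, TEN.arrTime, TEN.depTime] <;> first | rfl | norm_num

lemma ex_edgeFlow (f : PFlow Unit (fun _ => Fin 4)) (e : Fin 8) :
    exNet.edgeFlow f e =
      ![f () 0 + f () 1, f () 0 + f () 1, f () 1 + f () 2, f () 1 + f () 2,
        f () 1, f () 1, f () 2, f () 2] e := by
  fin_cases e <;>
    simp [TEN.edgeFlow, exNet, TEN.edges, Finset.sum_filter, Fin.sum_univ_four,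
      Fin.isValue, List.mem_toFinset] <;> first | rfl | ring


lemma pi0 : exNet.π () 0 = 0 := ex_pi 0
lemma pi1 : exNet.π () 1 = 0 := ex_pi 1
lemma pi2 : exNet.π () 2 = 1 := ex_pi 2
lemma pi3 : exNet.π () 3 = 2 := ex_pi 3

lemma eflow1 (f : PFlow Unit fun _ => Fin 4) :
    exNet.edgeFlow f 1 = f () 0 + f () 1 := ex_edgeFlow f 1
lemma eflow3 (f : PFlow Unit fun _ => Fin 4) :
    exNet.edgeFlow f 3 = f () 1 + f () 2 := ex_edgeFlow f 3
lemma eflow5 (f : PFlow Unit fun _ => Fin 4) :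
    exNet.edgeFlow f 5 = f () 1 := ex_edgeFlow f 5
lemma eflow7 (f : PFlow Unit fun _ => Fin 4) :
    exNet.edgeFlow f 7 = f () 2 := ex_edgeFlow f 7

lemma dev_apply (f : PFlow Unit fun _ => Fin 4) (p q : Fin 4) (ε : ℝ) (r : Fin 4) :
    deviate f () p q ε () r
      = f () r + ε * ((if r = q then 1 else 0) - (if r = p then 1 else 0)) := by
  simp [deviate, Function.update]

lemma ex_socialCost (lam : ℝ) : exNet.socialCost (exF lam) = 2 - lam := by
  simp [TEN.socialCost, Fin.sum_univ_four, exF, pi0, pi1, pi2, pi3]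
  ring

/-- There is a single-commodity fixed-departure-time instance admitting a
continuum of user equilibria `f^λ`, `λ ∈ [0,1]`, whose social costs are pairwise distinct;
in particular the social cost of a user equilibrium is not unique. -/
theorem stmt10 :
    ∃ (n m k : ℕ) (N : TEN (Fin n) (Fin m) Unit fun _ => Fin k),
      N.Valid ∧ N.FDT ∧
        ∃ F : ℝ → PFlow Unit (fun _ => Fin k),
          (∀ lam ∈ Set.Icc (0 : ℝ) 1, N.IsUE (F lam)) ∧
          ∀ lam ∈ Set.Icc (0 : ℝ) 1, ∀ mu ∈ Set.Icc (0 : ℝ) 1, lam ≠ mu →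
            N.socialCost (F lam) ≠ N.socialCost (F mu) := by
  refine ⟨4, 8, 4, exNet, ?_, ?_, exF, ?_, ?_⟩
  · -- Valid
    refine ⟨by decide, ?_, by decide, ?_, ?_, by decide, by rintro ⟨⟩ p; revert p; decide, ?_⟩
    · -- routes are valid paths
      rintro ⟨⟩ p hp
      fin_cases p <;>
        [skip; skip; skip; exact absurd rfl hp] <;>
        refine ⟨by decide, by simp [exNet, List.Chain', List.isChain_cons_cons] <;> decide, fun e he => ?_, fun e he => ?_⟩ <;>
        (simp [exNet] at he; subst he; decide)
    · -- boarding edges are followed by their succ edges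
      rintro ⟨⟩ p k
      fin_cases p <;> rcases k with _ | _ | _ | _ | _ | _ | k <;> intro e hk hb <;>
        simp [exNet] at hk <;> (subst hk; revert hb; decide)
    · -- non-first driving edges
      exact fun e _ _ => ⟨show (3 : Fin 8) ∈ exNet.driving by decide, rfl⟩
    · -- time monotonicity
      intro e
      fin_cases e <;> norm_num [exNet] <;> simp [Matrix.cons_val]
  · -- FDT
    rintro ⟨⟩
    exact ⟨by decide, fun _ _ _ => rfl⟩
  · -- user equilibrium
    rintro lam ⟨h0, h1⟩
    refine ⟨⟨⟨?_, ?_⟩, ?_⟩, ?_⟩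
    · rintro ⟨⟩ p
      fin_cases p <;> simp [exF] <;> linarith
    · rintro ⟨⟩
      show _ = (2 : ℝ)
      simp [exF, Fin.sum_univ_four]
      ring
    · intro e he
      fin_cases he
      · show exNet.edgeFlow (exF lam) 1 ≤ 1
        rw [eflow1]; simp [exF]
      · show exNet.edgeFlow (exF lam) 3 ≤ 1
        rw [eflow3]; simp [exF]
      · show exNet.edgeFlow (exF lam) 5 ≤ 1
        rw [eflow5]; simp [exF]; linarith
      · show exNet.edgeFlow (exF lam) 7 ≤ 1
        rw [eflow7]; simp [exF]; linarith
    · rintro ⟨⟩ p hp q hq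
      fin_cases p <;> fin_cases q
      -- p = 0
      · show exNet.π () 0 ≤ exNet.π () 0; rw [pi0]
      · show exNet.π () 0 ≤ exNet.π () 1; rw [pi0, pi1]
      · show exNet.π () 0 ≤ exNet.π () 2; rw [pi0, pi2]; norm_num
      · show exNet.π () 0 ≤ exNet.π () 3; rw [pi0, pi3]; norm_num
      -- p = 1
      · show exNet.π () 1 ≤ exNet.π () 0; rw [pi0, pi1]
      · show exNet.π () 1 ≤ exNet.π () 1; rw [pi1]
      · show exNet.π () 1 ≤ exNet.π () 2; rw [pi1, pi2]; norm_num
      · show exNet.π () 1 ≤ exNet.π () 3; rw [pi1, pi3]; norm_num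
      -- p = 2
      · exfalso
        obtain ⟨ε, hε, -, hcap⟩ := hq
        have h := hcap 0 (by decide) (by decide)
        rw [show exNet.succ 0 = 1 from rfl, eflow1] at h
        simp [dev_apply, exF, exNet] at h
        linarith
      · exfalso
        obtain ⟨ε, hε, -, hcap⟩ := hq
        have h := hcap 0 (by decide) (by decide)
        rw [show exNet.succ 0 = 1 from rfl, eflow1] at h
        simp [dev_apply, exF, exNet] at h
        linarith
      · show exNet.π () 2 ≤ exNet.π () 2; rw [pi2]
      · show exNet.π () 2 ≤ exNet.π () 3; rw [pi2, pi3]; norm_num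
      -- p = 3
      · exfalso
        obtain ⟨ε, hε, -, hcap⟩ := hq
        have h := hcap 0 (by decide) (by decide)
        rw [show exNet.succ 0 = 1 from rfl, eflow1] at h
        simp [dev_apply, exF, exNet] at h
        linarith
      · exfalso
        obtain ⟨ε, hε, -, hcap⟩ := hq
        have h := hcap 0 (by decide) (by decide)
        rw [show exNet.succ 0 = 1 from rfl, eflow1] at h
        simp [dev_apply, exF, exNet] at h
        linarith
      · exfalso
        obtain ⟨ε, hε, -, hcap⟩ := hq
        have h := hcap 2 (by decide) (by decide)
        rw [show exNet.succ 2 = 3 from rfl, eflow3] at h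
        simp [dev_apply, exF, exNet] at h
        linarith
      · show exNet.π () 3 ≤ exNet.π () 3; rw [pi3]
  · -- distinct social costs
    intro lam _ mu _ hne h
    rw [ex_socialCost, ex_socialCost] at h
    exact hne (by linarith)
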